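/- Let N ≥ 1, h ∈ ℝ, and V(φ) = (1/(2N)) Σ_{i,j=1}^N (1 − cos(φ_i − φ_j)) − h Σ_{i=1}^N cos φ_i. For v ∈ ℝ define the sublevel set M_v = { φ ∈ ℝ^N : V(φ)/N ≤ v }. Then for every v ≥ 1/2 + h²/2, the sublevel set M_v equals all of ℝ^N (equivalently, it equals the entire configuration torus). -/

import Mathlib

/-!
With `C = Σᵢ cos φᵢ` and `S = Σᵢ sin φᵢ`, the addition formula for the cosine gives
`Σᵢⱼ cos (φᵢ - φⱼ) = C² + S²`, so `V / N = 1/2 - (C² + S²) / (2N²) - h C / N`.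
Completing the square in `C / N` bounds this by `1/2 + h²/2`, whatever `φ` is.
-/

open Finset Real

theorem sum_sum_cos_sub {ι : Type*} [Fintype ι] (φ : ι → ℝ) :
    ∑ i, ∑ j, cos (φ i - φ j) = (∑ i, cos (φ i)) ^ 2 + (∑ i, sin (φ i)) ^ 2 := by
  simp only [cos_sub, sum_add_distrib, ← mul_sum, ← sum_mul, sq]

theorem sum_sum_one_sub_cos_sub {ι : Type*} [Fintype ι] (φ : ι → ℝ) :
    ∑ i, ∑ j, (1 - cos (φ i - φ j))
      = (Fintype.card ι : ℝ) ^ 2 - ((∑ i, cos (φ i)) ^ 2 + (∑ i, sin (φ i)) ^ 2) := by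
  simp only [sum_sub_distrib, sum_const, card_univ, nsmul_eq_mul, mul_one, sum_sum_cos_sub]
  ring

theorem mean_field_energy_le {n C S h : ℝ} (hn : 0 < n) :
    (1 / (2 * n) * (n ^ 2 - (C ^ 2 + S ^ 2)) - h * C) / n ≤ 1 / 2 + h ^ 2 / 2 := by
  rw [div_le_iff₀ hn]
  field_simp
  nlinarith [sq_nonneg (C + h * n), sq_nonneg S]

/-- For the mean-field XY potential
`V(φ) = (1/(2N)) Σᵢⱼ (1 − cos(φᵢ − φⱼ)) − h Σᵢ cos φᵢ` and any
`v ≥ 1/2 + h²/2`, the sublevel set `M_v = {φ : V(φ)/N ≤ v}` is the whole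
configuration space `ℝ^N`. -/
theorem xy_sublevel_eq_univ (N : ℕ) (hN : 1 ≤ N) (h v : ℝ) (hv : 1 / 2 + h ^ 2 / 2 ≤ v) :
    {φ : Fin N → ℝ |
        ((1 / (2 * (N : ℝ))) * ∑ i, ∑ j, (1 - Real.cos (φ i - φ j))
            - h * ∑ i, Real.cos (φ i)) / (N : ℝ) ≤ v}
      = Set.univ := by
  refine Set.eq_univ_of_forall fun φ => ?_
  have hNpos : (0 : ℝ) < N := by exact_mod_cast hN
  rw [Set.mem_ofPred_eq, sum_sum_one_sub_cos_sub, Fintype.card_fin]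
  exact (mean_field_energy_le hNpos).trans hv
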